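/- Let X, Y, Z be mutually independent random variables with X ~ Exp(λ_X), Y ~ Exp(λ_Y), Z ~ Exp(λ_Z), where λ_X, λ_Y, λ_Z > 0. Fix a > 0 (the ratio of source power to relay power) and T > 0. Then lim_{P → ∞} P² · Pr( P·X + f(P·Y, (P/a)·Z) < T ) = (T²/2) · λ_X · (λ_Y + a·λ_Z). In particular, for large source power P_s and relay power P_r = P_s/a, the outage probability of one amplify-and-forward ARQ round with mutual information threshold e^{2R} − 1 = T behaves as (T/P_s)² · λ_X (λ_Y + a λ_Z)/2. -/

import Mathlib

/-!
Since `f x y ≤ min x y`, the outage event contains `{X + W < T/p}` with `W = min Y (Z/a)`,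
and `W ~ Exp(λ_Y + a λ_Z)` is independent of `X`. Conversely, `f x y ≥ (1 - ε) min x y`
unless both `x` and `y` are `O(1/ε)`; so up to an event of probability `O(p⁻³)` on which
`X`, `Y`, `Z` are all `O(1/p)`, the outage event is contained in `{X + (1 - ε) W < T/p}`.
Everything thus reduces to `P(A + B < s) ~ α β s² / 2` as `s → 0` for independent
`A ~ Exp(α)`, `B ~ Exp(β)`: on `[0, s]` the density of `Exp(α)` lies between `α e^{-α s}`
and `α`, which squeezes the law of `(A, B)` on `{A + B < s}` between multiples of the area
`s² / 2` of a triangle.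
-/

open MeasureTheory ProbabilityTheory Filter Set

/-- The amplify-and-forward combining function `f(x,y) = x·y/(x+y+1)`. -/
noncomputable def f (x y : ℝ) : ℝ := x * y / (x + y + 1)

open Real Topology

theorem tendsto_of_tendsto_of_eventuallyLE_of_upper_approx {α ι β : Type*} [TopologicalSpace β]
    [LinearOrder β] [OrderTopology β] {l : Filter α} {l' : Filter ι} [l'.NeBot]
    {g q : α → β} {c : ι → β} {L : β}
    (hg : Tendsto g l (𝓝 L)) (hgq : g ≤ᶠ[l] q) (hc : Tendsto c l' (𝓝 L))
    (hu : ∀ᶠ i in l', ∃ u : α → β, Tendsto u l (𝓝 (c i)) ∧ q ≤ᶠ[l] u) : Tendsto q l (𝓝 L) := by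
  refine tendsto_order.2 ⟨fun m hm => ?_, fun M hM => ?_⟩
  · filter_upwards [hg.eventually (lt_mem_nhds hm), hgq] with p h1 h2 using h1.trans_le h2
  · obtain ⟨i, hci, u, hui, hqu⟩ := ((hc.eventually (gt_mem_nhds hM)).and hu).exists
    filter_upwards [hui.eventually (gt_mem_nhds hci), hqu] with p h1 h2 using h2.trans_lt h1

lemma volume_triangle {s : ℝ} (hs : 0 ≤ s) :
    volume {q : ℝ × ℝ | 0 ≤ q.1 ∧ 0 ≤ q.2 ∧ q.1 + q.2 < s} = ENNReal.ofReal (s ^ 2 / 2) := by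
  have hmeas : MeasurableSet {q : ℝ × ℝ | 0 ≤ q.1 ∧ 0 ≤ q.2 ∧ q.1 + q.2 < s} := by
    measurability
  have hfiber : ∀ x : ℝ, volume (Prod.mk x ⁻¹' {q : ℝ × ℝ | 0 ≤ q.1 ∧ 0 ≤ q.2 ∧ q.1 + q.2 < s})
      = (Icc 0 s).indicator (fun x => ENNReal.ofReal (s - x)) x := by
    intro x
    by_cases hx : x ∈ Icc 0 s
    · rw [indicator_of_mem hx, ← sub_zero (s - x), ← Real.volume_Ico]
      congr 1
      ext y
      simp only [mem_preimage, mem_ofPred_eq, mem_Ico]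
      constructor
      · rintro ⟨-, hy, hxy⟩
        exact ⟨hy, by linarith⟩
      · rintro ⟨hy, hxy⟩
        exact ⟨hx.1, hy, by linarith⟩
    · rw [indicator_of_notMem hx, measure_eq_zero_iff_ae_notMem]
      refine Eventually.of_forall fun y hy => hx ⟨hy.1, ?_⟩
      linarith [hy.2]
  rw [Measure.volume_eq_prod, Measure.prod_apply hmeas, lintegral_congr hfiber,
    lintegral_indicator measurableSet_Icc, ← ofReal_integral_eq_lintegral_ofReal,
    integral_Icc_eq_integral_Ioc, ← intervalIntegral.integral_of_le hs]
  · rw [intervalIntegral.integral_sub intervalIntegrable_const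
      intervalIntegral.intervalIntegrable_id, intervalIntegral.integral_const, integral_id]
    congr 1
    simp only [smul_eq_mul]
    ring
  · exact (continuous_const.sub continuous_id).integrableOn_Icc
  · exact (ae_restrict_iff' measurableSet_Icc).2
      (Eventually.of_forall fun x hx => sub_nonneg.2 hx.2)

lemma smul_restrict_prod_smul_restrict_add_lt {I : Set ℝ} {s : ℝ} (hs : 0 ≤ s)
    (hIcc : Icc 0 s ⊆ I) (hIci : I ⊆ Ici 0) (c d : ENNReal) :
    ((c • volume.restrict I).prod (d • volume.restrict I)) {q : ℝ × ℝ | q.1 + q.2 < s}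
      = c * d * ENNReal.ofReal (s ^ 2 / 2) := by
  have htri : {q : ℝ × ℝ | q.1 + q.2 < s} ∩ I ×ˢ I
      = {q : ℝ × ℝ | 0 ≤ q.1 ∧ 0 ≤ q.2 ∧ q.1 + q.2 < s} := by
    ext ⟨x, y⟩
    simp only [mem_inter_iff, mem_prod, mem_ofPred_eq]
    constructor
    · rintro ⟨hxy, hx, hy⟩
      exact ⟨hIci hx, hIci hy, hxy⟩
    · rintro ⟨hx, hy, hxy⟩
      exact ⟨hxy, hIcc ⟨hx, by linarith⟩, hIcc ⟨hy, by linarith⟩⟩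
  rw [Measure.prod_smul_left, Measure.prod_smul_right, Measure.prod_restrict,
    Measure.smul_apply, Measure.smul_apply,
    Measure.restrict_apply (measurableSet_lt (by fun_prop) measurable_const),
    ← Measure.volume_eq_prod, htri, volume_triangle hs, smul_eq_mul, smul_eq_mul, mul_assoc]

namespace ProbabilityTheory

variable {r : ℝ}

lemma expMeasure_Iic (hr : 0 < r) (x : ℝ) :
    expMeasure r (Iic x) = ENNReal.ofReal (if 0 ≤ x then 1 - exp (-(r * x)) else 0) := by
  have := isProbabilityMeasure_expMeasure hr
  rw [← ofReal_cdf, cdf_expMeasure_eq hr]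

lemma expMeasure_Ici (hr : 0 < r) (x : ℝ) :
    expMeasure r (Ici x) = ENNReal.ofReal (exp (-(r * max x 0))) := by
  have := isProbabilityMeasure_expMeasure hr
  have hx : expMeasure r {x} = 0 :=
    withDensity_absolutelyContinuous _ _ (Real.volume_singleton)
  rw [← compl_Iio, prob_compl_eq_one_sub measurableSet_Iio, measure_congr (Iio_ae_eq_Iic' hx),
    expMeasure_Iic hr]
  rcases le_or_gt 0 x with h | h
  · rw [if_pos h, max_eq_left h, ENNReal.ofReal_sub _ (by positivity), ENNReal.ofReal_one,
      ENNReal.sub_sub_cancel ENNReal.one_ne_top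
        (ENNReal.ofReal_le_one.2 (exp_le_one_iff.2 (by nlinarith)))]
  · simp [if_neg (not_le.2 h), max_eq_right h.le]

lemma ae_nonneg_expMeasure (hr : 0 < r) : ∀ᵐ x ∂expMeasure r, 0 ≤ x := by
  have := isProbabilityMeasure_expMeasure hr
  have h : expMeasure r (Ici 0)ᶜ = 0 :=
    (prob_compl_eq_zero_iff measurableSet_Ici).2 (by simp [expMeasure_Ici hr])
  exact measure_eq_zero_iff_ae_notMem.1 h |>.mono fun x hx => by simpa using hx

lemma expMeasure_le_smul_volume (hr : 0 < r) :
    expMeasure r ≤ ENNReal.ofReal r • volume.restrict (Ici 0) := by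
  rw [← withDensity_const, ← withDensity_indicator measurableSet_Ici, expMeasure, gammaMeasure]
  refine withDensity_mono (Eventually.of_forall fun x => ?_)
  change exponentialPDF r x ≤ _
  rcases le_or_gt 0 x with h | h
  · rw [indicator_of_mem (mem_Ici.2 h), exponentialPDF_of_nonneg h]
    exact ENNReal.ofReal_le_ofReal (mul_le_of_le_one_right hr.le (exp_le_one_iff.2 (by nlinarith)))
  · rw [exponentialPDF_of_neg h]
    exact zero_le

lemma smul_volume_le_expMeasure (hr : 0 < r) (s : ℝ) :
    ENNReal.ofReal (r * exp (-(r * s))) • volume.restrict (Icc 0 s) ≤ expMeasure r := by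
  rw [← withDensity_const, ← withDensity_indicator measurableSet_Icc, expMeasure, gammaMeasure]
  refine withDensity_mono (Eventually.of_forall fun x => ?_)
  change _ ≤ exponentialPDF r x
  by_cases h : x ∈ Icc 0 s
  · rw [indicator_of_mem h, exponentialPDF_of_nonneg h.1]
    gcongr
    exact h.2
  · rw [indicator_of_notMem h]
    exact zero_le

lemma expMeasure_Iio_le (hr : 0 < r) (t : ℝ) :
    expMeasure r (Iio t) ≤ ENNReal.ofReal (r * t) := by
  calc expMeasure r (Iio t) ≤ (ENNReal.ofReal r • volume.restrict (Ici 0)) (Iio t) :=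
        expMeasure_le_smul_volume hr _
    _ = ENNReal.ofReal (r * t) := by
      rw [Measure.smul_apply, Measure.restrict_apply measurableSet_Iio, Iio_inter_Ici,
        Real.volume_Ico, sub_zero, smul_eq_mul, ENNReal.ofReal_mul hr.le]

variable {α β : ℝ}

lemma expMeasure_prod_add_lt_le (hα : 0 < α) (hβ : 0 < β) {s : ℝ} (hs : 0 ≤ s) :
    (expMeasure α).prod (expMeasure β) {q : ℝ × ℝ | q.1 + q.2 < s}
      ≤ ENNReal.ofReal (α * β * (s ^ 2 / 2)) := by
  have := isProbabilityMeasure_expMeasure hβ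
  calc _ ≤ ((ENNReal.ofReal α • volume.restrict (Ici 0)).prod
          (ENNReal.ofReal β • volume.restrict (Ici 0))) {q : ℝ × ℝ | q.1 + q.2 < s} :=
        Measure.prod_mono (expMeasure_le_smul_volume hα) (expMeasure_le_smul_volume hβ) _
    _ = _ := by
      rw [smul_restrict_prod_smul_restrict_add_lt hs Icc_subset_Ici_self subset_rfl,
        ← ENNReal.ofReal_mul hα.le, ← ENNReal.ofReal_mul (by positivity)]

lemma le_expMeasure_prod_add_lt (hα : 0 < α) (hβ : 0 < β) {s : ℝ} (hs : 0 ≤ s) :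
    ENNReal.ofReal (α * exp (-(α * s)) * (β * exp (-(β * s))) * (s ^ 2 / 2))
      ≤ (expMeasure α).prod (expMeasure β) {q : ℝ × ℝ | q.1 + q.2 < s} := by
  have := isProbabilityMeasure_expMeasure hβ
  calc _ = ((ENNReal.ofReal (α * exp (-(α * s))) • volume.restrict (Icc 0 s)).prod
          (ENNReal.ofReal (β * exp (-(β * s))) • volume.restrict (Icc 0 s)))
            {q : ℝ × ℝ | q.1 + q.2 < s} := by
        rw [smul_restrict_prod_smul_restrict_add_lt hs subset_rfl Icc_subset_Ici_self,
          ← ENNReal.ofReal_mul (by positivity), ← ENNReal.ofReal_mul (by positivity)]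
    _ ≤ _ := Measure.prod_mono (smul_volume_le_expMeasure hα s) (smul_volume_le_expMeasure hβ s) _

lemma tendsto_sq_mul_expMeasure_prod_add_lt (hα : 0 < α) (hβ : 0 < β) {T : ℝ} (hT : 0 ≤ T) :
    Tendsto (fun p : ℝ => p ^ 2 *
      ((expMeasure α).prod (expMeasure β)).real {q : ℝ × ℝ | q.1 + q.2 < T / p})
      atTop (𝓝 (T ^ 2 / 2 * α * β)) := by
  have := isProbabilityMeasure_expMeasure hα
  have := isProbabilityMeasure_expMeasure hβ
  set c : ℝ → ℝ := fun s => α * exp (-(α * s)) * (β * exp (-(β * s))) with hc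
  have hc0 : Tendsto (fun p : ℝ => c (T / p)) atTop (𝓝 (α * β)) := by
    have hcont : Continuous c := by fun_prop
    simpa [hc, Function.comp_def] using
      (hcont.tendsto 0).comp (tendsto_const_nhds.div_atTop tendsto_id)
  have hscale : ∀ p : ℝ, 0 < p → p ^ 2 * ((T / p) ^ 2 / 2) = T ^ 2 / 2 := fun p hp => by
    field_simp
  refine tendsto_of_tendsto_of_tendsto_of_le_of_le' (g := fun p => c (T / p) * (T ^ 2 / 2))
    (by simpa [mul_comm, mul_assoc, mul_left_comm] using hc0.mul_const (T ^ 2 / 2))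
    tendsto_const_nhds ?_ ?_
  · filter_upwards [eventually_gt_atTop 0] with p hp
    have hs : 0 ≤ T / p := by positivity
    have h := (ENNReal.ofReal_le_iff_le_toReal (measure_ne_top _ _)).1
      (le_expMeasure_prod_add_lt hα hβ hs)
    calc c (T / p) * (T ^ 2 / 2) = p ^ 2 * (c (T / p) * ((T / p) ^ 2 / 2)) := by
          rw [← hscale p hp]; ring
      _ ≤ _ := by gcongr; exact h
  · filter_upwards [eventually_gt_atTop 0] with p hp
    have hs : 0 ≤ T / p := by positivity
    have h := ENNReal.toReal_le_of_le_ofReal (by positivity) (expMeasure_prod_add_lt_le hα hβ hs)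
    calc p ^ 2 * _ ≤ p ^ 2 * (α * β * ((T / p) ^ 2 / 2)) := by gcongr; exact h
      _ = T ^ 2 / 2 * α * β := by rw [mul_left_comm, hscale p hp]; ring

lemma map_const_mul_expMeasure (hr : 0 < r) {c : ℝ} (hc : 0 < c) :
    (expMeasure r).map (c * ·) = expMeasure (r / c) := by
  have := isProbabilityMeasure_expMeasure hr
  refine Measure.ext_of_Ici _ _ fun x => ?_
  have hpre : (c * ·) ⁻¹' Ici x = Ici (x / c) := by
    ext y
    simp [div_le_iff₀ hc, mul_comm]
  rw [Measure.map_apply (measurable_const_mul c) measurableSet_Ici, hpre, expMeasure_Ici hr,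
    expMeasure_Ici (div_pos hr hc), ← zero_div c, max_div_div_right hc.le, zero_div]
  congr 2
  ring

lemma map_min_expMeasure_prod (hα : 0 < α) (hβ : 0 < β) :
    ((expMeasure α).prod (expMeasure β)).map (fun q => min q.1 q.2) = expMeasure (α + β) := by
  have := isProbabilityMeasure_expMeasure hα
  have := isProbabilityMeasure_expMeasure hβ
  refine Measure.ext_of_Ici _ _ fun x => ?_
  have hpre : (fun q : ℝ × ℝ => min q.1 q.2) ⁻¹' Ici x = Ici x ×ˢ Ici x := by
    ext q
    simp only [mem_preimage, mem_Ici, le_min_iff, mem_prod]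
  rw [Measure.map_apply (by fun_prop) measurableSet_Ici, hpre, Measure.prod_prod,
    expMeasure_Ici hα, expMeasure_Ici hβ, expMeasure_Ici (add_pos hα hβ),
    ← ENNReal.ofReal_mul (exp_nonneg _), ← exp_add]
  congr 2
  ring

variable {Ω : Type*} [MeasurableSpace Ω] {P : Measure Ω} {A B : Ω → ℝ}

lemma ae_nonneg_of_map_eq_expMeasure (hA : Measurable A) {r : ℝ} (hr : 0 < r)
    (hAd : P.map A = expMeasure r) : ∀ᵐ ω ∂P, 0 ≤ A ω :=
  ae_of_ae_map hA.aemeasurable (hAd ▸ ae_nonneg_expMeasure hr)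

lemma measureReal_lt_le_of_map_eq_expMeasure (hA : Measurable A) {r : ℝ} (hr : 0 < r)
    (hAd : P.map A = expMeasure r) {t : ℝ} (ht : 0 ≤ t) : P.real {ω | A ω < t} ≤ r * t := by
  change P.real (A ⁻¹' Iio t) ≤ _
  rw [← map_measureReal_apply hA measurableSet_Iio, hAd]
  exact ENNReal.toReal_le_of_le_ofReal (by positivity) (expMeasure_Iio_le hr t)

lemma map_const_mul_eq_expMeasure (hB : Measurable B) (hβ : 0 < β)
    (hBd : P.map B = expMeasure β) {c : ℝ} (hc : 0 < c) :
    P.map (fun ω => c * B ω) = expMeasure (β / c) := by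
  rw [← map_const_mul_expMeasure hβ hc, ← hBd, Measure.map_map (measurable_const_mul c) hB]
  rfl

lemma IndepFun.map_min_eq_expMeasure [IsFiniteMeasure P] (hA : Measurable A) (hB : Measurable B)
    (hAB : IndepFun A B P) (hα : 0 < α) (hβ : 0 < β)
    (hAd : P.map A = expMeasure α) (hBd : P.map B = expMeasure β) :
    P.map (fun ω => min (A ω) (B ω)) = expMeasure (α + β) := by
  rw [← map_min_expMeasure_prod hα hβ, ← hAd, ← hBd,
    ← hAB.map_prod_eq_prod_map_map hA.aemeasurable hB.aemeasurable,
    Measure.map_map (by fun_prop) (hA.prodMk hB)]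
  rfl

lemma IndepFun.tendsto_sq_mul_measureReal_add_lt [IsFiniteMeasure P] (hA : Measurable A)
    (hB : Measurable B)
    (hAB : IndepFun A B P) (hα : 0 < α) (hβ : 0 < β)
    (hAd : P.map A = expMeasure α) (hBd : P.map B = expMeasure β) {T : ℝ} (hT : 0 ≤ T) :
    Tendsto (fun p : ℝ => p ^ 2 * P.real {ω | A ω + B ω < T / p})
      atTop (𝓝 (T ^ 2 / 2 * α * β)) := by
  have hprod := hAB.map_prod_eq_prod_map_map hA.aemeasurable hB.aemeasurable
  rw [hAd, hBd] at hprod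
  refine (tendsto_sq_mul_expMeasure_prod_add_lt hα hβ hT).congr fun p => ?_
  rw [← hprod,
    map_measureReal_apply (hA.prodMk hB) (measurableSet_lt (by fun_prop) measurable_const)]
  rfl

lemma iIndepFun.measureReal_inter_preimage_three {X Y V : Ω → ℝ} (h : iIndepFun ![X, Y, V] P)
    {s t u : Set ℝ} (hs : MeasurableSet s) (ht : MeasurableSet t) (hu : MeasurableSet u) :
    P.real (X ⁻¹' s ∩ Y ⁻¹' t ∩ V ⁻¹' u)
      = P.real (X ⁻¹' s) * P.real (Y ⁻¹' t) * P.real (V ⁻¹' u) := by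
  have h3 := h.measure_inter_preimage_eq_mul Finset.univ (sets := ![s, t, u])
    (fun i _ => by fin_cases i <;> assumption)
  have hset : ⋂ i ∈ Finset.univ, ![X, Y, V] i ⁻¹' ![s, t, u] i
      = X ⁻¹' s ∩ Y ⁻¹' t ∩ V ⁻¹' u := by
    ext ω
    simp [Fin.forall_fin_succ, and_assoc]
  rw [hset, Fin.prod_univ_three] at h3
  simp only [measureReal_def, h3, ENNReal.toReal_mul]
  rfl

end ProbabilityTheory

section

variable {x y : ℝ}

lemma f_comm (x y : ℝ) : f x y = f y x := by
  rw [f, f, mul_comm, add_comm x]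

lemma f_nonneg (hx : 0 ≤ x) (hy : 0 ≤ y) : 0 ≤ f x y := by
  unfold f; positivity

lemma f_le_min (hx : 0 ≤ x) (hy : 0 ≤ y) : f x y ≤ min x y := by
  rw [le_min_iff, f, div_le_iff₀ (by positivity), div_le_iff₀ (by positivity)]
  constructor <;> nlinarith

lemma one_sub_mul_min_le_f_or_lt (hx : 0 ≤ x) (hy : 0 ≤ y) {ε : ℝ} (hε : 0 < ε) :
    (1 - ε) * min x y ≤ f x y ∨ (x < (2 * f x y + 2) / ε ∧ y < (2 * f x y + 2) / ε) := by
  wlog hxy : x ≤ y generalizing x y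
  · rw [f_comm, min_comm, and_comm]
    exact this hy hx (le_of_not_ge hxy)
  have hf : f x y * (x + y + 1) = x * y := div_mul_cancel₀ _ (by positivity)
  have hf0 := f_nonneg hx hy
  rw [min_eq_left hxy]
  by_cases h : (1 - ε) * (x + 1) ≤ ε * y
  · left
    nlinarith [mul_le_mul_of_nonneg_left h hx]
  · right
    have hx2 : x ≤ 2 * f x y + 1 := by nlinarith [mul_le_mul_of_nonneg_left hxy hx]
    have hy2 : y < (2 * f x y + 2) / ε := by
      rw [lt_div_iff₀ hε]
      nlinarith
    exact ⟨hxy.trans_lt hy2, hy2⟩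

variable {Ω : Type*} [MeasurableSpace Ω] {P : Measure Ω} {X Y V : Ω → ℝ}
  {T p : ℝ}

lemma measureReal_add_min_lt_le_measureReal_add_f_lt [IsFiniteMeasure P] (hY0 : ∀ᵐ ω ∂P, 0 ≤ Y ω)
    (hV0 : ∀ᵐ ω ∂P, 0 ≤ V ω) (hp : 0 < p) :
    P.real {ω | X ω + min (Y ω) (V ω) < T / p}
      ≤ P.real {ω | p * X ω + f (p * Y ω) (p * V ω) < T} := by
  refine ENNReal.toReal_mono (measure_ne_top _ _) (measure_mono_ae ?_)
  filter_upwards [hY0, hV0] with ω hy hv hlt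
  have hf := f_le_min (mul_nonneg hp.le hy) (mul_nonneg hp.le hv)
  rw [← mul_min_of_nonneg _ _ hp.le] at hf
  have := (lt_div_iff₀ hp).1 hlt
  show p * X ω + f (p * Y ω) (p * V ω) < T
  nlinarith

lemma measureReal_add_f_lt_le [IsFiniteMeasure P] (hX0 : ∀ᵐ ω ∂P, 0 ≤ X ω) (hY0 : ∀ᵐ ω ∂P, 0 ≤ Y ω)
    (hV0 : ∀ᵐ ω ∂P, 0 ≤ V ω) {ε : ℝ} (hε : 0 < ε) (hp : 0 < p) :
    P.real {ω | p * X ω + f (p * Y ω) (p * V ω) < T}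
      ≤ P.real {ω | X ω + (1 - ε) * min (Y ω) (V ω) < T / p}
        + P.real (X ⁻¹' Iio (T / p) ∩ Y ⁻¹' Iio ((2 * T + 2) / ε / p)
            ∩ V ⁻¹' Iio ((2 * T + 2) / ε / p)) := by
  refine (ENNReal.toReal_mono (measure_ne_top _ _) (measure_mono_ae ?_)).trans
    (measureReal_union_le _ _)
  filter_upwards [hX0, hY0, hV0] with ω hx hy hv hlt
  change p * X ω + f (p * Y ω) (p * V ω) < T at hlt
  have hpx := mul_nonneg hp.le hx
  have hpy := mul_nonneg hp.le hy
  have hpv := mul_nonneg hp.le hv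
  have hf0 := f_nonneg hpy hpv
  rcases one_sub_mul_min_le_f_or_lt hpy hpv hε with hmin | ⟨hyK, hvK⟩
  · left
    rw [← mul_min_of_nonneg _ _ hp.le] at hmin
    show X ω + (1 - ε) * min (Y ω) (V ω) < T / p
    rw [lt_div_iff₀ hp]
    nlinarith
  · have hK : (2 * f (p * Y ω) (p * V ω) + 2) / ε < (2 * T + 2) / ε := by gcongr; linarith
    right
    refine ⟨⟨?_, ?_⟩, ?_⟩ <;> simp only [mem_preimage, mem_Iio] <;> rw [lt_div_iff₀ hp] <;>
      linarith

lemma tendsto_sq_mul_measureReal_lt_inter_lt_inter_lt (hX : Measurable X) (hY : Measurable Y)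
    (hV : Measurable V) (hindep : iIndepFun ![X, Y, V] P) {α β γ : ℝ} (hα : 0 < α) (hβ : 0 < β)
    (hγ : 0 < γ) (hXd : P.map X = expMeasure α) (hYd : P.map Y = expMeasure β)
    (hVd : P.map V = expMeasure γ) {a b c : ℝ} (ha : 0 ≤ a) (hb : 0 ≤ b) (hc : 0 ≤ c) :
    Tendsto (fun p : ℝ =>
        p ^ 2 * P.real (X ⁻¹' Iio (a / p) ∩ Y ⁻¹' Iio (b / p) ∩ V ⁻¹' Iio (c / p)))
      atTop (𝓝 0) := by
  refine tendsto_of_tendsto_of_tendsto_of_le_of_le' tendsto_const_nhds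
    ((tendsto_const_nhds (x := α * a * (β * b) * (γ * c))).div_atTop tendsto_id) ?_ ?_
  · exact Eventually.of_forall fun p => by positivity
  · filter_upwards [eventually_gt_atTop 0] with p hp
    rw [hindep.measureReal_inter_preimage_three measurableSet_Iio measurableSet_Iio
      measurableSet_Iio]
    calc p ^ 2 * (P.real (X ⁻¹' Iio (a / p)) * P.real (Y ⁻¹' Iio (b / p))
          * P.real (V ⁻¹' Iio (c / p)))
        ≤ p ^ 2 * (α * (a / p) * (β * (b / p)) * (γ * (c / p))) := by
          gcongr
          · exact measureReal_lt_le_of_map_eq_expMeasure hX hα hXd (by positivity)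
          · exact measureReal_lt_le_of_map_eq_expMeasure hY hβ hYd (by positivity)
          · exact measureReal_lt_le_of_map_eq_expMeasure hV hγ hVd (by positivity)
      _ = α * a * (β * b) * (γ * c) / p := by field_simp

theorem tendsto_sq_mul_measureReal_add_f_lt [IsFiniteMeasure P] (hX : Measurable X)
    (hY : Measurable Y) (hV : Measurable V) (hindep : iIndepFun ![X, Y, V] P) {α β γ : ℝ}
    (hα : 0 < α) (hβ : 0 < β) (hγ : 0 < γ) (hXd : P.map X = expMeasure α)
    (hYd : P.map Y = expMeasure β) (hVd : P.map V = expMeasure γ) (hT : 0 ≤ T) :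
    Tendsto (fun p : ℝ => p ^ 2 * P.real {ω | p * X ω + f (p * Y ω) (p * V ω) < T})
      atTop (𝓝 (T ^ 2 / 2 * α * (β + γ))) := by
  have hmeas : ∀ i, Measurable (![X, Y, V] i) := fun i => by fin_cases i <;> assumption
  have hW : ∀ c > 0, P.map (fun ω => c * min (Y ω) (V ω)) = expMeasure ((β + γ) / c) :=
    fun c hc => map_const_mul_eq_expMeasure (hY.min hV) (add_pos hβ hγ)
      ((hindep.indepFun (i := 1) (j := 2) (by decide)).map_min_eq_expMeasure hY hV hβ hγ hYd hVd) hc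
  have hXW : ∀ c, IndepFun X (fun ω => c * min (Y ω) (V ω)) P := fun c =>
    ((hindep.indepFun_prodMk hmeas 1 2 0 (by decide) (by decide)).comp
      (by fun_prop : Measurable fun q : ℝ × ℝ => c * min q.1 q.2) measurable_id).symm
  have hlim : ∀ c > 0,
      Tendsto (fun p : ℝ => p ^ 2 * P.real {ω | X ω + c * min (Y ω) (V ω) < T / p})
        atTop (𝓝 (T ^ 2 / 2 * α * ((β + γ) / c))) := fun c hc =>
    (hXW c).tendsto_sq_mul_measureReal_add_lt hX (by fun_prop) hα
      (div_pos (add_pos hβ hγ) hc) hXd (hW c hc) hT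
  have hX0 := ae_nonneg_of_map_eq_expMeasure hX hα hXd
  have hY0 := ae_nonneg_of_map_eq_expMeasure hY hβ hYd
  have hV0 := ae_nonneg_of_map_eq_expMeasure hV hγ hVd
  refine tendsto_of_tendsto_of_eventuallyLE_of_upper_approx (l' := 𝓝[>] 0)
    (g := fun p => p ^ 2 * P.real {ω | X ω + min (Y ω) (V ω) < T / p})
    (c := fun ε => T ^ 2 / 2 * α * ((β + γ) / (1 - ε))) (by simpa using hlim 1 one_pos) ?_ ?_ ?_
  · filter_upwards [eventually_gt_atTop 0] with p hp
    exact mul_le_mul_of_nonneg_left (measureReal_add_min_lt_le_measureReal_add_f_lt hY0 hV0 hp)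
      (sq_nonneg p)
  · have : ContinuousAt (fun ε : ℝ => T ^ 2 / 2 * α * ((β + γ) / (1 - ε))) 0 := by
      fun_prop (disch := norm_num)
    simpa using this.tendsto.mono_left nhdsWithin_le_nhds
  · filter_upwards [Ioo_mem_nhdsGT one_pos] with ε hε
    have hK : 0 ≤ (2 * T + 2) / ε := div_nonneg (by positivity) hε.1.le
    have hup := (hlim (1 - ε) (by linarith [hε.2])).add
      (tendsto_sq_mul_measureReal_lt_inter_lt_inter_lt hX hY hV hindep hα hβ hγ hXd hYd hVd
        hT hK hK)
    rw [add_zero] at hup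
    refine ⟨_, hup, ?_⟩
    filter_upwards [eventually_gt_atTop 0] with p hp
    rw [← mul_add]
    exact mul_le_mul_of_nonneg_left (measureReal_add_f_lt_le hX0 hY0 hV0 hε.1 hp) (sq_nonneg p)

end

/-- **Theorem 1 of the paper, in terms of exponential rates.**
For mutually independent `X ~ Exp(λ_X)`, `Y ~ Exp(λ_Y)`, `Z ~ Exp(λ_Z)`, a fixed
power ratio `a > 0` and threshold `T > 0`,
`lim_{P → ∞} P² · Pr( P·X + f(P·Y, (P/a)·Z) < T ) = (T²/2)·λ_X·(λ_Y + a·λ_Z)`. -/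
theorem theorem1_outage_asymptotics
    {Ω : Type*} [MeasurableSpace Ω] (P : Measure Ω) [IsProbabilityMeasure P]
    (lamX lamY lamZ : ℝ) (hlamX : 0 < lamX) (hlamY : 0 < lamY) (hlamZ : 0 < lamZ)
    (X Y Z : Ω → ℝ) (hX : Measurable X) (hY : Measurable Y) (hZ : Measurable Z)
    (hXdist : Measure.map X P = expMeasure lamX)
    (hYdist : Measure.map Y P = expMeasure lamY)
    (hZdist : Measure.map Z P = expMeasure lamZ)
    (hindep : iIndepFun ![X, Y, Z] P)
    (a T : ℝ) (ha : 0 < a) (hT : 0 < T) :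
    Tendsto
      (fun p : ℝ => p ^ 2 *
        (P {ω | p * X ω + f (p * Y ω) ((p / a) * Z ω) < T}).toReal)
      atTop (nhds (T ^ 2 / 2 * lamX * (lamY + a * lamZ))) := by
  have hV : P.map (fun ω => a⁻¹ * Z ω) = expMeasure (lamZ / a⁻¹) :=
    map_const_mul_eq_expMeasure hZ hlamZ hZdist (inv_pos.2 ha)
  have hindepV : iIndepFun ![X, Y, fun ω => a⁻¹ * Z ω] P := by
    convert hindep.comp ![id, id, (a⁻¹ * ·)]
      (fun i => by fin_cases i <;> simp [measurable_id, measurable_const_mul]) using 1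
    funext i
    fin_cases i <;> rfl
  have h := tendsto_sq_mul_measureReal_add_f_lt hX hY (hZ.const_mul _) hindepV hlamX hlamY
    (div_pos hlamZ (inv_pos.2 ha)) hXdist hYdist hV hT.le
  rw [div_inv_eq_mul, mul_comm lamZ] at h
  refine h.congr fun p => ?_
  simp only [div_eq_mul_inv, mul_assoc]
  rfl
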